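/- arXiv:1102.3461 — 3 statements merged into one kernel-verified Lean document; each statement's English description precedes it below -/
import Mathlib

section
/- The distributional solution of the Cauchy problem is unique: if μ and ν are both continuous maps from [0,T] to M₁([0,∞)) with μ(0) = ν(0) = λ which both satisfy the weak-form identity for every Schwartz function g and every t ∈ [0,T], then μ(t) = ν(t) for all t ∈ [0,T]. -/
open MeasureTheory Set

/-- A distributional solution of the Cauchy problem
`∂ρ/∂t = −(η/2) e^{ηt/2} m_λ ∂ρ/∂x + (1/2) e^{ηt/2} m_λ ∂²(xρ)/∂x²`, `ρ(0) = λ`: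
a continuous map `ρ : [0,T] → M₁([0,∞))` (probability measures on `ℝ` carried by `[0,∞)`,
with the topology of weak convergence) such that `ρ(0) = λ` and, for every Schwartz
function `g` and every `t ∈ [0,T]`,
`∫ g dρ(t) − ∫ g dλ = m_λ ∫₀ᵗ e^{ηs/2} [∫ ((η/2) g′(x) + (x/2) g″(x)) ρ(s)(dx)] ds`. -/
def IsDistribSol (η T mlam : ℝ) (hT : 0 ≤ T) (lam : ProbabilityMeasure ℝ)
    (ρ : C(Set.Icc (0:ℝ) T, ProbabilityMeasure ℝ)) : Prop :=
  (∀ t : Set.Icc (0:ℝ) T, (ρ t : Measure ℝ) (Set.Ici 0) = 1) ∧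
  ρ ⟨0, Set.left_mem_Icc.2 hT⟩ = lam ∧
  ∀ (g : SchwartzMap ℝ ℝ) (t : Set.Icc (0:ℝ) T),
    (∫ x, g x ∂(ρ t : Measure ℝ)) - ∫ x, g x ∂(lam : Measure ℝ)
      = mlam * ∫ s in (0:ℝ)..(t : ℝ), Real.exp (η * s / 2) *
          ∫ x, (η / 2 * deriv g x + x / 2 * deriv (deriv (⇑g)) x)
            ∂(ρ (Set.projIcc 0 T hT s) : Measure ℝ)

/-!
Testing the equation against a Schwartz function equal to `e^{-ζx}` on `[0, ∞)` shows that the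
Laplace transform `u(t, ζ) = ∫ e^{-ζx} ρ(t)(dx)` is, in integrated form, a solution of the
first-order equation `∂ₜu = m_λ e^{ηt/2} (-(ηζ/2) u - (ζ²/2) ∂_ζ u)`. Along its characteristics
`ζ(τ) = ξ / D(τ)`, `D(τ) = 1 + ξ m_λ (e^{ηt/2} - e^{ητ/2}) / η`, the quantity `D(τ)^{-η} u(τ, ζ(τ))`
is constant, so `u(t, ξ)` is an explicit expression in the Laplace transform of `λ`. Two
solutions therefore have the same Laplace transform at every time, and a finite measure on
`[0, ∞)` is determined by its Laplace transform: pushed to `ℝ≥0`, the polynomials in `e^{-x}`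
form a point-separating algebra of bounded continuous functions.
-/

open Filter Topology
open scoped NNReal Nat BoundedContinuousFunction ContDiff SchwartzMap

/-- Agrees with `x ^ j * e^{-ζx}` on `[0, ∞)`, where all measures below live, and is bounded and
continuous on `ℝ` when `ζ > 0`. -/
noncomputable def laplaceKernel (j : ℕ) (ζ x : ℝ) : ℝ :=
  max x 0 ^ j * Real.exp (-ζ * max x 0)

section LaplaceKernel

variable {j : ℕ} {a ζ x : ℝ}

lemma laplaceKernel_of_nonneg (hx : 0 ≤ x) : laplaceKernel j ζ x = x ^ j * Real.exp (-ζ * x) := by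
  rw [laplaceKernel, max_eq_left hx]

@[fun_prop]
lemma continuous_laplaceKernel : Continuous (laplaceKernel j ζ) := by
  unfold laplaceKernel; fun_prop

lemma abs_laplaceKernel_le (ha : 0 < a) (hζ : a ≤ ζ) (x : ℝ) :
    |laplaceKernel j ζ x| ≤ j ! / a ^ j := by
  set y := max x 0
  have hy : 0 ≤ y := le_max_right x 0
  have hpow : (a * y) ^ j / j ! ≤ Real.exp (a * y) :=
    Real.pow_div_factorial_le_exp _ (by positivity) j
  rw [laplaceKernel, abs_of_nonneg (by positivity), le_div_iff₀ (by positivity)]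
  calc y ^ j * Real.exp (-ζ * y) * a ^ j
      ≤ (a * y) ^ j * Real.exp (-a * y) := by
        rw [mul_pow, mul_right_comm, mul_comm (a ^ j)]
        gcongr
    _ ≤ j ! * Real.exp (a * y) * Real.exp (-a * y) := by
        gcongr
        exact ((div_le_iff₀ (by positivity)).1 hpow).trans_eq (mul_comm _ _)
    _ = j ! := by rw [mul_assoc, ← Real.exp_add, neg_mul, add_neg_cancel, Real.exp_zero, mul_one]

lemma hasDerivAt_laplaceKernel (j : ℕ) (ζ x : ℝ) :
    HasDerivAt (fun ζ => laplaceKernel j ζ x) (-laplaceKernel (j + 1) ζ x) ζ := by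
  have := ((hasDerivAt_neg ζ).mul_const (max x 0)).exp.const_mul (max x 0 ^ j)
  unfold laplaceKernel
  exact this.congr_deriv (by ring)

noncomputable def laplaceKernelBCF (j : ℕ) (hζ : 0 < ζ) : ℝ →ᵇ ℝ :=
  .ofNormedAddCommGroup (laplaceKernel j ζ) continuous_laplaceKernel _
    (abs_laplaceKernel_le hζ le_rfl)

lemma integrable_laplaceKernel (j : ℕ) (hζ : 0 < ζ) (m : Measure ℝ) [IsFiniteMeasure m] :
    Integrable (laplaceKernel j ζ) m :=
  (laplaceKernelBCF j hζ).integrable m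

end LaplaceKernel

noncomputable def laplaceMoment (j : ℕ) (m : Measure ℝ) (ζ : ℝ) : ℝ :=
  ∫ x, laplaceKernel j ζ x ∂m

section LaplaceMoment

variable {j : ℕ} {a ζ : ℝ} {m : Measure ℝ}

lemma abs_laplaceMoment_le [IsProbabilityMeasure m] (ha : 0 < a) (hζ : a ≤ ζ) :
    |laplaceMoment j m ζ| ≤ j ! / a ^ j := by
  unfold laplaceMoment
  simpa using norm_integral_le_of_norm_le_const (μ := m) (f := laplaceKernel j ζ)
    (Eventually.of_forall (abs_laplaceKernel_le (j := j) ha hζ))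

lemma hasDerivAt_laplaceMoment [IsFiniteMeasure m] (hζ : 0 < ζ) :
    HasDerivAt (laplaceMoment j m) (-laplaceMoment (j + 1) m ζ) ζ := by
  have hζ2 : 0 < ζ / 2 := half_pos hζ
  have key := hasDerivAt_integral_of_dominated_loc_of_deriv_le (μ := m) (x₀ := ζ)
    (F := fun ζ x => laplaceKernel j ζ x) (F' := fun ζ x => -laplaceKernel (j + 1) ζ x)
    (bound := fun _ => (j + 1)! / (ζ / 2) ^ (j + 1)) (Ioi_mem_nhds (half_lt_self hζ))
    (Eventually.of_forall fun _ => continuous_laplaceKernel.aestronglyMeasurable)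
    (integrable_laplaceKernel j hζ m)
    continuous_laplaceKernel.neg.aestronglyMeasurable
    (Eventually.of_forall fun x ζ' hζ' => by
      simpa using abs_laplaceKernel_le (j := j + 1) hζ2 (le_of_lt hζ') x)
    (integrable_const _)
    (Eventually.of_forall fun x ζ' _ => hasDerivAt_laplaceKernel j ζ' x)
  show HasDerivAt (fun ζ => ∫ x, laplaceKernel j ζ x ∂m)
    (-∫ x, laplaceKernel (j + 1) ζ x ∂m) ζ
  simpa [integral_neg] using key.2

lemma lipschitzOnWith_laplaceMoment [IsProbabilityMeasure m] (ha : 0 < a) :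
    LipschitzOnWith (Real.toNNReal ((j + 1)! / a ^ (j + 1))) (laplaceMoment j m) (Ici a) := by
  refine (convex_Ici a).lipschitzOnWith_of_nnnorm_hasDerivWithin_le
    (fun ζ hζ => (hasDerivAt_laplaceMoment (ha.trans_le hζ)).hasDerivWithinAt) fun ζ hζ => ?_
  rw [← NNReal.coe_le_coe, coe_nnnorm, Real.coe_toNNReal _ (by positivity), norm_neg]
  exact abs_laplaceMoment_le ha hζ

variable {X : Type*} [TopologicalSpace X] {κ : X → ProbabilityMeasure ℝ}

lemma continuous_laplaceMoment_comp (hκ : Continuous κ) (hζ : 0 < ζ) :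
    Continuous fun s => laplaceMoment j (κ s) ζ :=
  (ProbabilityMeasure.continuous_integral_boundedContinuousFunction
    (laplaceKernelBCF j hζ)).comp hκ

lemma continuousAt_laplaceMoment_uncurry (hκ : Continuous κ) (hζ : 0 < ζ) (s : X) :
    ContinuousAt (fun p : X × ℝ => laplaceMoment j (κ p.1) p.2) (s, ζ) := by
  have hζ2 : 0 < ζ / 2 := half_pos hζ
  refine (continuousOn_prod_of_continuousOn_lipschitzOnWith' (s := univ) (t := Ici (ζ / 2)) _ _
    (fun s _ => lipschitzOnWith_laplaceMoment (m := (κ s : Measure ℝ)) (j := j) hζ2)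
    fun ζ' hζ' => (continuous_laplaceMoment_comp hκ (hζ2.trans_le hζ')).continuousOn).continuousAt
      ?_
  exact prod_mem_nhds univ_mem (Ici_mem_nhds (half_lt_self hζ))

end LaplaceMoment

noncomputable def expNegNNReal : ℝ≥0 →ᵇ ℝ :=
  BoundedContinuousFunction.ofNormedAddCommGroup (fun x : ℝ≥0 => Real.exp (-(x : ℝ)))
    (by fun_prop) 1 fun x => by simp

theorem NNReal.measure_ext_of_integral_exp_neg_nat_eq {P P' : Measure ℝ≥0} [IsFiniteMeasure P]
    [IsFiniteMeasure P']
    (h : ∀ n : ℕ, ∫ x, Real.exp (-n * x) ∂P = ∫ x, Real.exp (-n * x) ∂P') : P = P' := by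
  refine ext_of_forall_mem_subalgebra_integral_eq_of_polish (𝕜 := ℝ)
    (A := StarAlgebra.adjoin ℝ {expNegNNReal}) ?_ fun g hg => ?_
  · intro x y hxy
    refine ⟨_, ⟨_, ⟨expNegNNReal, StarAlgebra.subset_adjoin ℝ _ (mem_singleton _), rfl⟩, rfl⟩, ?_⟩
    simpa [expNegNNReal] using hxy
  · replace hg : g ∈ (StarAlgebra.adjoin ℝ {expNegNNReal}).toSubalgebra := hg
    have star_expNegNNReal : star expNegNNReal = expNegNNReal := by ext; simp
    rw [StarAlgebra.adjoin_toSubalgebra, Set.star_singleton, star_expNegNNReal, union_self,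
      Algebra.adjoin_singleton_eq_range_aeval] at hg
    obtain ⟨p, rfl⟩ := hg
    induction p using Polynomial.induction_on' with
    | add p q hp hq =>
      simp only [map_add, BoundedContinuousFunction.coe_add, Pi.add_apply]
      rw [integral_add (BoundedContinuousFunction.integrable _ _)
          (BoundedContinuousFunction.integrable _ _),
        integral_add (BoundedContinuousFunction.integrable _ _)
          (BoundedContinuousFunction.integrable _ _), hp, hq]
    | monomial n a =>
      have hpow : ∀ x : ℝ≥0, expNegNNReal x ^ n = Real.exp (-n * x) := fun x => by
        simp [expNegNNReal, ← Real.exp_nat_mul]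
      simpa [Polynomial.aeval_monomial, hpow, integral_const_mul] using Or.inl (h n)

theorem MeasureTheory.Measure.ext_of_integral_exp_neg_nat_eq {μ ν : Measure ℝ} [IsFiniteMeasure μ]
    [IsFiniteMeasure ν] (hμ : ∀ᵐ x ∂μ, 0 ≤ x) (hν : ∀ᵐ x ∂ν, 0 ≤ x)
    (h : ∀ n : ℕ, ∫ x, Real.exp (-n * x) ∂μ = ∫ x, Real.exp (-n * x) ∂ν) : μ = ν := by
  have map_map_toNNReal :
      ∀ m : Measure ℝ, (∀ᵐ x ∂m, 0 ≤ x) → (m.map Real.toNNReal).map (↑) = m :=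
    fun m hm => by
      rw [Measure.map_map (by fun_prop) (by fun_prop)]
      conv_rhs => rw [← Measure.map_id (μ := m)]
      exact Measure.map_congr (hm.mono fun x hx => Real.coe_toNNReal x hx)
  have integral_map_toNNReal : ∀ m : Measure ℝ, (∀ᵐ x ∂m, 0 ≤ x) → ∀ n : ℕ,
      ∫ x, Real.exp (-n * x) ∂(m.map Real.toNNReal) = ∫ x, Real.exp (-n * x) ∂m :=
    fun m hm n => by
      rw [integral_map (by fun_prop) (by fun_prop)]
      exact integral_congr_ae (hm.mono fun x hx => by simp [Real.coe_toNNReal x hx])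
  rw [← map_map_toNNReal μ hμ, ← map_map_toNNReal ν hν]
  congr 1
  refine NNReal.measure_ext_of_integral_exp_neg_nat_eq fun n => ?_
  rw [integral_map_toNNReal μ hμ, integral_map_toNNReal ν hν, h n]

lemma integral_exp_neg_mul_eq_laplaceMoment {m : Measure ℝ} (hm : ∀ᵐ x ∂m, 0 ≤ x) (ζ : ℝ) :
    ∫ x, Real.exp (-ζ * x) ∂m = laplaceMoment 0 m ζ :=
  integral_congr_ae (hm.mono fun x hx => by simp [laplaceKernel_of_nonneg hx])

theorem MeasureTheory.Measure.ext_of_laplaceMoment_eq {μ ν : Measure ℝ} [IsProbabilityMeasure μ]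
    [IsProbabilityMeasure ν] (hμ : ∀ᵐ x ∂μ, 0 ≤ x) (hν : ∀ᵐ x ∂ν, 0 ≤ x)
    (h : ∀ ξ > 0, laplaceMoment 0 μ ξ = laplaceMoment 0 ν ξ) : μ = ν := by
  refine Measure.ext_of_integral_exp_neg_nat_eq hμ hν fun n => ?_
  rcases n.eq_zero_or_pos with rfl | hn
  · simp
  · rw [integral_exp_neg_mul_eq_laplaceMoment hμ, integral_exp_neg_mul_eq_laplaceMoment hν]
    exact h n (Nat.cast_pos.2 hn)

noncomputable def expNegCutoff (ζ x : ℝ) : ℝ :=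
  Real.exp (-ζ * x) * Real.smoothTransition (x + 2)

section ExpNegCutoff

variable {ζ x : ℝ}

lemma contDiff_expNegCutoff (ζ : ℝ) : ContDiff ℝ ∞ (expNegCutoff ζ) := by
  unfold expNegCutoff
  exact (Real.contDiff_exp.comp (contDiff_const.mul contDiff_id)).mul
    (Real.smoothTransition.contDiff.comp (contDiff_id.add contDiff_const))

lemma expNegCutoff_eventuallyEq_exp (hx : -1 < x) :
    expNegCutoff ζ =ᶠ[𝓝 x] fun y => Real.exp (-ζ * y) := by
  filter_upwards [Ioi_mem_nhds hx] with y hy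
  rw [expNegCutoff, Real.smoothTransition.one_of_one_le (by linarith [mem_Ioi.1 hy]), mul_one]

lemma expNegCutoff_eventuallyEq_zero (hx : x < -2) : expNegCutoff ζ =ᶠ[𝓝 x] 0 := by
  filter_upwards [Iio_mem_nhds hx] with y hy
  rw [expNegCutoff, Real.smoothTransition.zero_of_nonpos (by linarith [mem_Iio.1 hy]), mul_zero,
    Pi.zero_apply]

lemma iteratedDeriv_expNegCutoff_of_neg_one_lt (n : ℕ) (hx : -1 < x) :
    iteratedDeriv n (expNegCutoff ζ) x = (-ζ) ^ n * Real.exp (-ζ * x) := by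
  rw [(expNegCutoff_eventuallyEq_exp hx).iteratedDeriv_eq, iteratedDeriv_exp_const_mul]

lemma iteratedDeriv_expNegCutoff_of_lt_neg_two (n : ℕ) (hx : x < -2) :
    iteratedDeriv n (expNegCutoff ζ) x = 0 := by
  rw [(expNegCutoff_eventuallyEq_zero hx).iteratedDeriv_eq, iteratedDeriv_const_zero]

lemma expNegCutoff_decay (hζ : 0 < ζ) (k n : ℕ) :
    ∃ C, ∀ x : ℝ, ‖x‖ ^ k * ‖iteratedFDeriv ℝ n (expNegCutoff ζ) x‖ ≤ C := by
  simp_rw [norm_iteratedFDeriv_eq_norm_iteratedDeriv]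
  obtain ⟨C, hC⟩ := (isCompact_Icc (a := (-2 : ℝ)) (b := 0)).exists_bound_of_continuousOn
    ((continuous_norm.pow k).mul
      ((contDiff_expNegCutoff ζ).continuous_iteratedDeriv n ENat.LEInfty.out).norm).continuousOn
  refine ⟨max C (|ζ| ^ n * (k ! / ζ ^ k)), fun x => ?_⟩
  rcases lt_or_ge x (-2) with hx | hx
  · rw [iteratedDeriv_expNegCutoff_of_lt_neg_two n hx, norm_zero, mul_zero]
    exact le_max_of_le_left ((norm_nonneg _).trans (hC (-2) ⟨le_rfl, by norm_num⟩))
  rcases le_or_gt x 0 with hx0 | hx0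
  · exact le_max_of_le_left ((le_abs_self _).trans (hC x ⟨hx, hx0⟩))
  · refine le_max_of_le_right ?_
    rw [iteratedDeriv_expNegCutoff_of_neg_one_lt n (by linarith), norm_mul, norm_pow, norm_neg,
      Real.norm_of_nonneg (Real.exp_pos _).le, Real.norm_of_nonneg hx0.le, mul_left_comm,
      ← laplaceKernel_of_nonneg hx0.le]
    exact mul_le_mul_of_nonneg_left ((le_abs_self _).trans (abs_laplaceKernel_le hζ le_rfl x))
      (by positivity)

lemma generator_expNegCutoff_of_nonneg (η : ℝ) (hx : 0 ≤ x) :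
    η / 2 * deriv (expNegCutoff ζ) x + x / 2 * deriv (deriv (expNegCutoff ζ)) x
      = -(η * ζ / 2) * laplaceKernel 0 ζ x + ζ ^ 2 / 2 * laplaceKernel 1 ζ x := by
  have h1 := iteratedDeriv_expNegCutoff_of_neg_one_lt (ζ := ζ) 1 (by linarith : (-1 : ℝ) < x)
  have h2 := iteratedDeriv_expNegCutoff_of_neg_one_lt (ζ := ζ) 2 (by linarith : (-1 : ℝ) < x)
  rw [iteratedDeriv_one] at h1
  rw [iteratedDeriv_succ, iteratedDeriv_one] at h2
  rw [h1, h2, laplaceKernel_of_nonneg hx, laplaceKernel_of_nonneg hx]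
  ring

variable {m : Measure ℝ}

lemma integral_expNegCutoff (hm : ∀ᵐ x ∂m, 0 ≤ x) :
    ∫ x, expNegCutoff ζ x ∂m = laplaceMoment 0 m ζ :=
  integral_congr_ae (hm.mono fun x hx => by
    simp [(expNegCutoff_eventuallyEq_exp (by linarith : (-1 : ℝ) < x)).eq_of_nhds,
      laplaceKernel_of_nonneg hx])

lemma integral_generator_expNegCutoff [IsFiniteMeasure m] (hm : ∀ᵐ x ∂m, 0 ≤ x) (hζ : 0 < ζ)
    (η : ℝ) :
    ∫ x, (η / 2 * deriv (expNegCutoff ζ) x + x / 2 * deriv (deriv (expNegCutoff ζ)) x) ∂m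
      = -(η * ζ / 2) * laplaceMoment 0 m ζ + ζ ^ 2 / 2 * laplaceMoment 1 m ζ := by
  rw [integral_congr_ae (hm.mono fun x hx => generator_expNegCutoff_of_nonneg η hx),
    integral_add ((integrable_laplaceKernel 0 hζ m).const_mul _)
      ((integrable_laplaceKernel 1 hζ m).const_mul _),
    integral_const_mul, integral_const_mul]
  rfl

end ExpNegCutoff

noncomputable def expNegSchwartz (ζ : ℝ) (hζ : 0 < ζ) : 𝓢(ℝ, ℝ) where
  toFun := expNegCutoff ζ
  smooth' := contDiff_expNegCutoff ζ
  decay' := expNegCutoff_decay hζ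

@[simp]
lemma coe_expNegSchwartz (ζ : ℝ) (hζ : 0 < ζ) : ⇑(expNegSchwartz ζ hζ) = expNegCutoff ζ := rfl

theorem hasDerivAt_intervalIntegral_of_continuousAt_uncurry {E Y : Type*} [NormedAddCommGroup E]
    [NormedSpace ℝ E] [CompleteSpace E] [TopologicalSpace Y] {G : ℝ → Y → E} {y : ℝ → Y} {τ₀ : ℝ}
    (hG : ContinuousAt (Function.uncurry G) (τ₀, y τ₀)) (hy : ContinuousAt y τ₀)
    (hint : ∀ᶠ τ in 𝓝 τ₀, IntervalIntegrable (fun s => G s (y τ)) volume τ₀ τ) :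
    HasDerivAt (fun τ => ∫ s in τ₀..τ, G s (y τ)) (G τ₀ (y τ₀)) τ₀ := by
  rw [hasDerivAt_iff_isLittleO, Asymptotics.isLittleO_iff]
  intro ε hε
  obtain ⟨U, hU, V, hV, hUV⟩ := mem_nhds_prod_iff.1 (hG (Metric.closedBall_mem_nhds _ hε))
  obtain ⟨δ, hδ, hδU⟩ := Metric.mem_nhds_iff.1 hU
  filter_upwards [hint, hy hV, Metric.ball_mem_nhds τ₀ hδ] with τ hτint hτV hτδ
  have hclose : ∀ s ∈ uIoc τ₀ τ, ‖G s (y τ) - G τ₀ (y τ₀)‖ ≤ ε := fun s hs => by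
    have hsδ : s ∈ Metric.ball τ₀ δ := by
      rw [Metric.mem_ball, Real.dist_eq] at hτδ ⊢
      exact (abs_sub_left_of_mem_uIcc (uIoc_subset_uIcc hs)).trans_lt hτδ
    simpa [dist_eq_norm] using hUV (mk_mem_prod (hδU hsδ) hτV)
  calc ‖(∫ s in τ₀..τ, G s (y τ)) - (∫ s in τ₀..τ₀, G s (y τ₀)) - (τ - τ₀) • G τ₀ (y τ₀)‖
      = ‖∫ s in τ₀..τ, (G s (y τ) - G τ₀ (y τ₀))‖ := by
        rw [intervalIntegral.integral_same, sub_zero,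
          intervalIntegral.integral_sub hτint intervalIntegrable_const,
          intervalIntegral.integral_const]
    _ ≤ ε * |τ - τ₀| := intervalIntegral.norm_integral_le_of_norm_le_const hclose
    _ = ε * ‖τ - τ₀‖ := by rw [Real.norm_eq_abs]

noncomputable def transportRHS (η : ℝ) (c : ℝ → ℝ) (u w : ℝ → ℝ → ℝ) (s ζ : ℝ) : ℝ :=
  c s * (-(η * ζ / 2) * u s ζ + ζ ^ 2 / 2 * w s ζ)

/-- `u` solves `∂ₜu = c(t) (-(ηζ/2) u - (ζ²/2) ∂_ζ u)` on `[0, T] × (0, ∞)` in integrated form,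
with `w = -∂_ζ u`. -/
structure IsMildTransportSolution (η : ℝ) (c : ℝ → ℝ) (T : ℝ) (u w : ℝ → ℝ → ℝ) : Prop where
  continuousAt_u : ∀ s, ∀ ζ > 0, ContinuousAt (Function.uncurry u) (s, ζ)
  continuousAt_w : ∀ s, ∀ ζ > 0, ContinuousAt (Function.uncurry w) (s, ζ)
  hasDerivAt : ∀ τ ∈ Icc 0 T, ∀ ζ > 0, HasDerivAt (u τ) (-w τ ζ) ζ
  eq_integral : ∀ τ ∈ Icc 0 T, ∀ ζ > 0, u τ ζ = u 0 ζ + ∫ s in 0..τ, transportRHS η c u w s ζ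

namespace IsMildTransportSolution

variable {η T : ℝ} {c : ℝ → ℝ} {u w : ℝ → ℝ → ℝ}

lemma continuousAt_transportRHS (h : IsMildTransportSolution η c T u w) (hc : Continuous c)
    (s : ℝ) {ζ : ℝ} (hζ : 0 < ζ) :
    ContinuousAt (Function.uncurry (transportRHS η c u w)) (s, ζ) := by
  have hu := h.continuousAt_u s ζ hζ
  have hw := h.continuousAt_w s ζ hζ
  unfold transportRHS
  fun_prop

/-- Differentiating the integrated form rather than `u` gives two-sided derivatives also at the
endpoints of `[0, T]`. -/
lemma hasDerivAt_along (h : IsMildTransportSolution η c T u w) (hc : Continuous c)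
    {ζ : ℝ → ℝ} {ζ' τ₀ : ℝ} (hτ₀ : τ₀ ∈ Icc 0 T) (hζ : HasDerivAt ζ ζ' τ₀) (hζ₀ : 0 < ζ τ₀) :
    HasDerivAt (fun τ => u 0 (ζ τ) + ∫ s in 0..τ, transportRHS η c u w s (ζ τ))
      (-w τ₀ (ζ τ₀) * ζ' + transportRHS η c u w τ₀ (ζ τ₀)) τ₀ := by
  have hpos : ∀ᶠ τ in 𝓝 τ₀, 0 < ζ τ := hζ.continuousAt.eventually (lt_mem_nhds hζ₀)
  have hint : ∀ᶠ τ in 𝓝 τ₀, ∀ a b : ℝ,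
      IntervalIntegrable (fun s => transportRHS η c u w s (ζ τ)) volume a b :=
    hpos.mono fun τ hτ a b => (continuous_iff_continuousAt.2 fun s =>
      (h.continuousAt_transportRHS hc s hτ).comp (f := fun s' => (s', ζ τ))
        (by fun_prop)).intervalIntegrable a b
  have hsplit : (fun τ => u τ₀ (ζ τ) + ∫ s in τ₀..τ, transportRHS η c u w s (ζ τ))
      =ᶠ[𝓝 τ₀] fun τ => u 0 (ζ τ) + ∫ s in 0..τ, transportRHS η c u w s (ζ τ) := by
    filter_upwards [hpos, hint] with τ hτ hτint
    rw [h.eq_integral τ₀ hτ₀ _ hτ, add_assoc,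
      intervalIntegral.integral_add_adjacent_intervals (hτint _ _) (hτint _ _)]
  refine (((h.hasDerivAt τ₀ hτ₀ _ hζ₀).comp τ₀ hζ).add ?_).congr_of_eventuallyEq hsplit.symm
  exact hasDerivAt_intervalIntegral_of_continuousAt_uncurry
    (h.continuousAt_transportRHS hc τ₀ hζ₀) hζ.continuousAt (hint.mono fun τ hτ => hτ _ _)

/-- Method of characteristics: with `C' = c` and `D τ = 1 + ξ (C t - C τ) / 2`, the quantity
`D τ ^ (-η) * u τ (ξ / D τ)` is constant on `[0, t]`. -/
theorem eq_along_characteristic (h : IsMildTransportSolution η c T u w) (hc : Continuous c)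
    {C : ℝ → ℝ} (hC : ∀ τ, HasDerivAt C (c τ) τ) (hCmono : MonotoneOn C (Icc 0 T))
    {t ξ : ℝ} (ht : t ∈ Icc 0 T) (hξ : 0 < ξ) :
    u t ξ = (1 + ξ * (C t - C 0) / 2) ^ (-η) * u 0 (ξ / (1 + ξ * (C t - C 0) / 2)) := by
  set D : ℝ → ℝ := fun τ => 1 + ξ * (C t - C τ) / 2 with hD_def
  have hD : ∀ τ, HasDerivAt D (-(ξ * c τ / 2)) τ := fun τ =>
    ((((hC τ).const_sub (C t)).const_mul ξ).div_const 2 |>.const_add 1).congr_deriv (by ring)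
  have hD_pos : ∀ τ ∈ Icc 0 t, 0 < D τ := fun τ hτ => by
    have := hCmono ⟨hτ.1, hτ.2.trans ht.2⟩ ht hτ.2
    simp only [hD_def]
    nlinarith
  have hF : ∀ τ ∈ Icc 0 t, HasDerivAt (fun τ => D τ ^ (-η) *
      (u 0 (ξ / D τ) + ∫ s in 0..τ, transportRHS η c u w s (ξ / D τ))) 0 τ := by
    intro τ hτ
    have hτT : τ ∈ Icc 0 T := ⟨hτ.1, hτ.2.trans ht.2⟩
    have hDτ := hD_pos τ hτ
    have hζ : HasDerivAt (fun τ => ξ / D τ) (ξ * (ξ * c τ / 2) / D τ ^ 2) τ :=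
      ((hasDerivAt_const τ ξ).div (hD τ) hDτ.ne').congr_deriv (by ring)
    have hu := h.eq_integral τ hτT _ (div_pos hξ hDτ)
    refine (((hD τ).rpow_const (p := -η) (Or.inl hDτ.ne')).mul
      (h.hasDerivAt_along hc hτT hζ (div_pos hξ hDτ))).congr_deriv ?_
    rw [← hu, transportRHS, Real.rpow_sub_one hDτ.ne']
    field_simp
    ring
  have hconst := constant_of_has_deriv_right_zero
    (fun τ hτ => (hF τ hτ).continuousAt.continuousWithinAt)
    (fun τ hτ => (hF τ (Ico_subset_Icc_self hτ)).hasDerivWithinAt) t (right_mem_Icc.2 ht.1)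
  have hDt : D t = 1 := by simp [hD_def]
  rw [hDt, Real.one_rpow, one_mul, div_one, ← h.eq_integral t ht ξ hξ,
    intervalIntegral.integral_same, add_zero] at hconst
  exact hconst

end IsMildTransportSolution

lemma ae_nonneg_of_measure_Ici_eq_one {m : Measure ℝ} [IsProbabilityMeasure m]
    (h : m (Ici 0) = 1) : ∀ᵐ x ∂m, 0 ≤ x :=
  (ae_iff_measure_eq measurableSet_Ici.nullMeasurableSet).2 (by rwa [measure_univ])

namespace IsDistribSol

variable {η T mlam : ℝ} {hT : 0 ≤ T} {lam : ProbabilityMeasure ℝ}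
  {ρ : C(Icc (0 : ℝ) T, ProbabilityMeasure ℝ)}

lemma ae_nonneg (hρ : IsDistribSol η T mlam hT lam ρ) (t : Icc (0 : ℝ) T) :
    ∀ᵐ x ∂(ρ t : Measure ℝ), 0 ≤ x :=
  ae_nonneg_of_measure_Ici_eq_one (hρ.1 t)

theorem isMildTransportSolution (hρ : IsDistribSol η T mlam hT lam ρ) :
    IsMildTransportSolution η (fun s => mlam * Real.exp (η * s / 2)) T
      (fun s => laplaceMoment 0 (ρ (projIcc 0 T hT s)))
      (fun s => laplaceMoment 1 (ρ (projIcc 0 T hT s))) where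
  continuousAt_u s _ hζ :=
    continuousAt_laplaceMoment_uncurry (ρ.continuous.comp continuous_projIcc) hζ s
  continuousAt_w s _ hζ :=
    continuousAt_laplaceMoment_uncurry (ρ.continuous.comp continuous_projIcc) hζ s
  hasDerivAt _ _ _ hζ := hasDerivAt_laplaceMoment hζ
  eq_integral τ hτ ζ hζ := by
    have hweak := hρ.2.2 (expNegSchwartz ζ hζ) ⟨τ, hτ⟩
    simp only [coe_expNegSchwartz, integral_generator_expNegCutoff (hρ.ae_nonneg _) hζ] at hweak
    rw [integral_expNegCutoff (hρ.ae_nonneg _), ← hρ.2.1,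
      integral_expNegCutoff (hρ.ae_nonneg _)] at hweak
    simp only [transportRHS, mul_assoc, intervalIntegral.integral_const_mul, projIcc_of_mem hT hτ,
      projIcc_left]
    linarith

theorem laplaceMoment_eq (hρ : IsDistribSol η T mlam hT lam ρ) (hη : 0 < η) (hm : 0 < mlam)
    (t : Icc (0 : ℝ) T) {ξ : ℝ} (hξ : 0 < ξ) :
    laplaceMoment 0 (ρ t) ξ = (1 + ξ * mlam / η * (Real.exp (η * t / 2) - 1)) ^ (-η) *
      laplaceMoment 0 lam (ξ / (1 + ξ * mlam / η * (Real.exp (η * t / 2) - 1))) := by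
  have hC : ∀ τ, HasDerivAt (fun s => 2 * mlam / η * Real.exp (η * s / 2))
      (mlam * Real.exp (η * τ / 2)) τ := fun τ =>
    ((((hasDerivAt_id τ).const_mul η).div_const 2).exp.const_mul _).congr_deriv
      (by simp only [id]; field_simp)
  have hCmono : MonotoneOn (fun s => 2 * mlam / η * Real.exp (η * s / 2)) (Icc 0 T) :=
    fun a _ b _ hab => by dsimp only; gcongr
  have key := hρ.isMildTransportSolution.eq_along_characteristic (by fun_prop) hC hCmono t.2 hξ
  have hD : 1 + ξ * (2 * mlam / η * Real.exp (η * t / 2) - 2 * mlam / η * Real.exp (η * 0 / 2)) / 2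
      = 1 + ξ * mlam / η * (Real.exp (η * t / 2) - 1) := by
    simp only [mul_zero, zero_div, Real.exp_zero]
    ring
  simpa only [hD, projIcc_val, projIcc_left, hρ.2.1] using key

end IsDistribSol

theorem uniqueness_of_distributional_solution_general
    (η T : ℝ) (hη : 1 < η) (hT : 0 < T)
    (lam : ProbabilityMeasure ℝ)
    (mlam : ℝ) (hmpos : 0 < mlam)
    (μ ν : C(Set.Icc (0:ℝ) T, ProbabilityMeasure ℝ))
    (hμ : IsDistribSol η T mlam hT.le lam μ) (hν : IsDistribSol η T mlam hT.le lam ν) :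
    μ = ν := by
  ext1 t
  apply ProbabilityMeasure.toMeasure_injective
  refine Measure.ext_of_laplaceMoment_eq (hμ.ae_nonneg t) (hν.ae_nonneg t) fun ξ hξ => ?_
  rw [hμ.laplaceMoment_eq (by linarith) hmpos t hξ, hν.laplaceMoment_eq (by linarith) hmpos t hξ]

/-- Uniqueness of the distributional solution of the Cauchy problem. -/
theorem uniqueness_of_distributional_solution
    (η T : ℝ) (hη : 1 < η) (hT : 0 < T)
    (lam : ProbabilityMeasure ℝ) (hlam : (lam : Measure ℝ) (Set.Ici 0) = 1)
    (hmom : Integrable (fun x : ℝ => x) (lam : Measure ℝ))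
    (mlam : ℝ) (hmlam : mlam = ∫ x, x ∂(lam : Measure ℝ)) (hmpos : 0 < mlam)
    (μ ν : C(Set.Icc (0:ℝ) T, ProbabilityMeasure ℝ))
    (hμ : IsDistribSol η T mlam hT.le lam μ) (hν : IsDistribSol η T mlam hT.le lam ν) :
    μ = ν :=
  uniqueness_of_distributional_solution_general η T hη hT lam mlam hmpos μ ν hμ hν
end

section
/- For every ε > 0, P( sup_{0 ≤ t ≤ T} | A_N · exp((η/2 − 1/(2N)) t + N^{−1/2} W_t) − m e^{ηt/2} | > ε ) → 0 as N → ∞; that is, the random continuous functions t ↦ A_N exp((η/2 − 1/(2N)) t + N^{−1/2} W_t) converge to t ↦ m e^{ηt/2} uniformly on [0,T] in probability. -/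
open MeasureTheory ProbabilityTheory Set Filter

/-- A standard one-dimensional Brownian motion: a continuous process starting at `0`
whose increments are independent and centered Gaussian of variance equal to the time
increment. -/
structure IsBrownianMotion {Ω : Type*} [MeasurableSpace Ω] (P : Measure Ω)
    (W : ℝ → Ω → ℝ) : Prop where
  meas : ∀ t : ℝ, Measurable (W t)
  cont : ∀ ω, Continuous fun t => W t ω
  start : ∀ ω, W 0 ω = 0
  incr_law : ∀ s t : ℝ, 0 ≤ s → s ≤ t →
    P.map (fun ω => W t ω - W s ω) = gaussianReal 0 (Real.toNNReal (t - s))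
  incr_indep : ∀ (n : ℕ) (ts : Fin (n + 1) → ℝ), Monotone ts →
    iIndepFun
      (fun i : Fin n => fun ω => W (ts i.succ) ω - W (ts i.castSucc) ω) P

open Topology

/-! Since `η ≥ 0`, the factor `exp (η t / 2)` is at most `exp (η T / 2)`, and what remains is
`A_N exp δ_N(t) - m` with `δ_N(t) = W_t / √N - t / (2N)`. If `M` bounds `|W|` on `[0, T]`, then
`|δ_N(t)| ≤ S_N := T / (2N) + M / √N`, so the supremum is at most a continuous function,
vanishing at the origin, of `A_N - m` and `S_N`. Both tend to `0` in probability: `A_N - m` by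
Chebyshev, as `E (A_N - m)² = E A_N² - 2 m E A_N + m² → 0`, and `S_N` even pathwise. -/

lemma Real.abs_exp_sub_one_le_exp_abs_sub_one (x : ℝ) : |Real.exp x - 1| ≤ Real.exp |x| - 1 := by
  have hx := Real.add_one_le_exp x
  have hnx := Real.add_one_le_exp (-x)
  rcases le_total 0 x with h | h
  · rw [abs_of_nonneg h, abs_of_nonneg (by linarith)]
  · rw [abs_of_nonpos h, abs_of_nonpos (by simpa using Real.exp_le_one_iff.2 h)]
    linarith

lemma abs_mul_exp_sub_le {a m δ s : ℝ} (ha : 0 ≤ a) (hδ : |δ| ≤ s) :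
    |a * Real.exp δ - m| ≤ (|a - m| + m) * (Real.exp s - 1) + |a - m| := by
  have hexp : |Real.exp δ - 1| ≤ Real.exp s - 1 :=
    (Real.abs_exp_sub_one_le_exp_abs_sub_one δ).trans (by gcongr)
  have ha_le : a ≤ |a - m| + m := by linarith [le_abs_self (a - m)]
  calc |a * Real.exp δ - m| = |a * (Real.exp δ - 1) + (a - m)| := by congr 1; ring
    _ ≤ a * |Real.exp δ - 1| + |a - m| :=
        (abs_add_le _ _).trans_eq (by rw [abs_mul, abs_of_nonneg ha])
    _ ≤ (|a - m| + m) * (Real.exp s - 1) + |a - m| := by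
        gcongr
        exact ha.trans ha_le

lemma iSup_abs_mul_exp_sub_le {η T m a M : ℝ} (hη : 0 ≤ η) (hT : 0 ≤ T) (ha : 0 ≤ a)
    {w : ℝ → ℝ} (hw : ∀ t ∈ Icc 0 T, |w t| ≤ M) (N : ℕ) :
    ⨆ t ∈ Icc (0:ℝ) T, |a * Real.exp ((η / 2 - 1 / (2 * N)) * t + w t / Real.sqrt N)
        - m * Real.exp (η * t / 2)|
      ≤ Real.exp (η * T / 2) *
          ((|a - m| + m) * (Real.exp (T / (2 * N) + M / Real.sqrt N) - 1) + |a - m|) := by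
  have hpoint : ∀ t ∈ Icc 0 T,
      |a * Real.exp ((η / 2 - 1 / (2 * N)) * t + w t / Real.sqrt N) - m * Real.exp (η * t / 2)|
        ≤ Real.exp (η * T / 2) *
          ((|a - m| + m) * (Real.exp (T / (2 * N) + M / Real.sqrt N) - 1) + |a - m|) := by
    intro t ht
    set δ := w t / Real.sqrt N - t / (2 * N)
    have hδ : |δ| ≤ T / (2 * N) + M / Real.sqrt N :=
      calc |δ| ≤ |w t / Real.sqrt N| + |t / (2 * N)| := abs_sub _ _
        _ = |w t| / Real.sqrt N + t / (2 * N) := by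
          rw [abs_div, abs_of_nonneg (Real.sqrt_nonneg _),
            abs_of_nonneg (div_nonneg ht.1 (by positivity))]
        _ ≤ T / (2 * N) + M / Real.sqrt N := by
          rw [add_comm]
          gcongr
          exacts [ht.2, hw t ht]
    calc |a * Real.exp ((η / 2 - 1 / (2 * N)) * t + w t / Real.sqrt N)
          - m * Real.exp (η * t / 2)|
        = |Real.exp (η * t / 2) * (a * Real.exp δ - m)| := by
          rw [show (η / 2 - 1 / (2 * N)) * t + w t / Real.sqrt N = η * t / 2 + δ by ring,
            Real.exp_add]
          congr 1
          ring
      _ = Real.exp (η * t / 2) * |a * Real.exp δ - m| := by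
          rw [abs_mul, abs_of_pos (Real.exp_pos _)]
      _ ≤ _ := mul_le_mul (Real.exp_le_exp.2 (by nlinarith [ht.2])) (abs_mul_exp_sub_le ha hδ)
          (abs_nonneg _) (Real.exp_pos _).le
  have hbound_nonneg := (abs_nonneg _).trans (hpoint 0 ⟨le_rfl, hT⟩)
  exact Real.iSup_le (fun t => Real.iSup_le (hpoint t) hbound_nonneg) hbound_nonneg

lemma exists_measurable_forall_abs_le_of_continuous {Ω : Type*} [MeasurableSpace Ω]
    {X : ℝ → Ω → ℝ} (hmeas : ∀ t, Measurable (X t)) (hcont : ∀ ω, Continuous (X · ω))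
    (a b : ℝ) : ∃ M : Ω → ℝ, Measurable M ∧ ∀ ω, ∀ t ∈ Icc a b, |X t ω| ≤ M ω := by
  -- clamping keeps the supremum countable, and by density of `ℚ` it still sees all of `[a, b]`
  set clamp : ℝ → ℝ := fun x => max a (min b x)
  have hclamp : Continuous clamp := by fun_prop
  refine ⟨fun ω => ⨆ q : ℚ, |X (clamp q) ω|, .iSup fun q => (hmeas _).abs, fun ω t ht => ?_⟩
  have hbdd : BddAbove (range fun q : ℚ => |X (clamp q) ω|) := by
    refine ((isCompact_Icc (a := a) (b := max a b)).image_of_continuousOn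
      (hcont ω).abs.continuousOn).bddAbove.mono ?_
    rintro _ ⟨q, rfl⟩
    exact ⟨clamp q, ⟨le_max_left _ _, max_le_max le_rfl (min_le_left _ _)⟩, rfl⟩
  have hclamp_t : clamp t = t := by simp only [clamp, min_eq_right ht.2, max_eq_right ht.1]
  rw [← hclamp_t]
  exact Rat.denseRange_cast.induction_on t
    (isClosed_le ((hcont ω).comp hclamp).abs continuous_const) (le_ciSup hbdd)

section ConvergenceInMeasure

variable {α ι : Type*} [MeasurableSpace α] {μ : Measure α} {l : Filter ι}

lemma tendstoInMeasure_zero_of_tendsto_integral_sq [IsFiniteMeasure μ] {f : ι → α → ℝ}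
    (hf : ∀ i, Integrable (fun x => f i x ^ 2) μ)
    (h : Tendsto (fun i => ∫ x, f i x ^ 2 ∂μ) l (𝓝 0)) : TendstoInMeasure μ f l 0 := by
  rw [tendstoInMeasure_iff_measureReal_dist]
  intro ε hε
  refine squeeze_zero (fun _ => measureReal_nonneg) (fun i => ?_)
    (by simpa using h.div_const (ε ^ 2))
  rw [le_div_iff₀ (by positivity), mul_comm]
  refine le_trans ?_ (mul_meas_ge_le_integral_of_nonneg
    (ae_of_all _ fun x => sq_nonneg (f i x)) (hf i) (ε ^ 2))
  refine mul_le_mul_of_nonneg_left (measureReal_mono fun x hx => ?_) (by positivity)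
  simp only [mem_ofPred_eq, Pi.zero_apply, Real.dist_eq, sub_zero] at hx ⊢
  simpa only [sq_abs] using pow_le_pow_left₀ hε.le hx 2

lemma tendstoInMeasure_sub_const_of_tendsto_moments [IsProbabilityMeasure μ] {X : ι → α → ℝ}
    {m : ℝ} (hmeas : ∀ i, AEStronglyMeasurable (X i) μ)
    (hX2 : ∀ i, Integrable (fun x => X i x ^ 2) μ)
    (h1 : Tendsto (fun i => ∫ x, X i x ∂μ) l (𝓝 m))
    (h2 : Tendsto (fun i => ∫ x, X i x ^ 2 ∂μ) l (𝓝 (m ^ 2))) :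
    TendstoInMeasure μ (fun i x => X i x - m) l 0 := by
  have hexpand : ∀ i, (fun x => (X i x - m) ^ 2) = fun x => X i x ^ 2 - 2 * m * X i x + m ^ 2 :=
    fun i => funext fun x => by ring
  have hX : ∀ i, Integrable (X i) μ := fun i =>
    ((memLp_two_iff_integrable_sq (hmeas i)).2 (hX2 i)).integrable one_le_two
  have hlin : ∀ i, Integrable (fun x => X i x ^ 2 - 2 * m * X i x) μ := fun i =>
    (hX2 i).sub ((hX i).const_mul _)
  refine tendstoInMeasure_zero_of_tendsto_integral_sq
    (fun i => hexpand i ▸ (hlin i).add (integrable_const _)) ?_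
  have hintegral : ∀ i, ∫ x, (X i x - m) ^ 2 ∂μ
      = ∫ x, X i x ^ 2 ∂μ - 2 * m * ∫ x, X i x ∂μ + m ^ 2 := by
    intro i
    rw [hexpand, integral_add (hlin i) (integrable_const _),
      integral_sub (hX2 i) ((hX i).const_mul _), integral_const_mul, integral_const, probReal_univ,
      one_smul]
  have h := (h2.sub (h1.const_mul (2 * m))).add_const (m ^ 2)
  rw [show m ^ 2 - 2 * m * m + m ^ 2 = 0 by ring] at h
  exact h.congr fun i => (hintegral i).symm

lemma tendsto_measure_lt_of_le_of_tendstoInMeasure {X U V : ι → α → ℝ} {F : ℝ × ℝ → ℝ}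
    (hF : ContinuousAt F 0) (hF0 : F 0 = 0) (hU : TendstoInMeasure μ U l 0)
    (hV : TendstoInMeasure μ V l 0) (hX : ∀ i x, X i x ≤ F (U i x, V i x)) {ε : ℝ}
    (hε : 0 < ε) : Tendsto (fun i => μ {x | ε < X i x}) l (𝓝 0) := by
  obtain ⟨δ, hδ, hFδ⟩ := Metric.continuousAt_iff.1 hF ε hε
  rw [tendstoInMeasure_iff_dist] at hU hV
  refine tendsto_of_tendsto_of_tendsto_of_le_of_le tendsto_const_nhds
    (by simpa using (hU δ hδ).add (hV δ hδ)) (fun _ => zero_le) (fun i => ?_)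
  refine (measure_mono fun x hx => ?_).trans (measure_union_le _ _)
  by_contra hsmall
  simp only [mem_union, mem_ofPred_eq, not_or, not_le] at hsmall
  have hdist : dist (U i x, V i x) 0 < δ := by
    simpa [Prod.dist_eq] using hsmall
  have := hFδ hdist
  rw [hF0, Real.dist_eq, sub_zero] at this
  exact lt_irrefl ε (((hx.trans_le (hX i x)).trans_le (le_abs_self _)).trans this)

end ConvergenceInMeasure

theorem sup_exponential_martingale_tendsto_in_probability_general
    {Ω : Type*} [MeasurableSpace Ω] (P : Measure Ω) [IsProbabilityMeasure P]
    (η T m : ℝ) (hη : 1 < η) (hT : 0 < T)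
    (W : ℝ → Ω → ℝ) (hW : IsBrownianMotion P W)
    (A : ℕ → Ω → ℝ) (hAmeas : ∀ N, Measurable (A N)) (hApos : ∀ N ω, 0 ≤ A N ω)
    (hAL2 : ∀ N, Integrable (fun ω => (A N ω) ^ 2) P)
    (hA1 : Tendsto (fun N => ∫ ω, A N ω ∂P) atTop (nhds m))
    (hA2 : Tendsto (fun N => ∫ ω, (A N ω) ^ 2 ∂P) atTop (nhds (m ^ 2))) :
    ∀ ε > (0:ℝ),
      Tendsto (fun N : ℕ =>
          P {ω | ε < ⨆ t ∈ Set.Icc (0:ℝ) T,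
            |A N ω * Real.exp ((η / 2 - 1 / (2 * N)) * t + W t ω / Real.sqrt N)
              - m * Real.exp (η * t / 2)|})
        atTop (nhds 0) := by
  intro ε hε
  obtain ⟨M, hMmeas, hM⟩ := exists_measurable_forall_abs_le_of_continuous hW.meas hW.cont 0 T
  have hS : TendstoInMeasure P (fun (N : ℕ) ω => T / (2 * N) + M ω / Real.sqrt N) atTop 0 := by
    refine tendstoInMeasure_of_tendsto_ae
      (fun N => (measurable_const.add (hMmeas.div_const _)).aestronglyMeasurable)
      (ae_of_all _ fun ω => ?_)
    simpa using (tendsto_const_nhds.div_atTop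
      (tendsto_natCast_atTop_atTop.const_mul_atTop two_pos)).add
      (tendsto_const_nhds.div_atTop (Real.tendsto_sqrt_atTop.comp tendsto_natCast_atTop_atTop))
  exact tendsto_measure_lt_of_le_of_tendstoInMeasure
    (F := fun p => Real.exp (η * T / 2) * ((|p.1| + m) * (Real.exp p.2 - 1) + |p.1|))
    (by fun_prop) (by simp)
    (tendstoInMeasure_sub_const_of_tendsto_moments
      (fun N => (hAmeas N).aestronglyMeasurable) hAL2 hA1 hA2) hS
    (fun N ω => iSup_abs_mul_exp_sub_le (by linarith) hT.le (hApos N ω) (hM ω) N) hε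

/-- The random continuous functions `t ↦ A_N exp((η/2 − 1/(2N)) t + N^{−1/2} W_t)`
converge to `t ↦ m e^{ηt/2}` uniformly on `[0,T]` in probability. -/
theorem sup_exponential_martingale_tendsto_in_probability
    {Ω : Type*} [MeasurableSpace Ω] (P : Measure Ω) [IsProbabilityMeasure P]
    (η T m : ℝ) (hη : 1 < η) (hT : 0 < T) (hm : 0 ≤ m)
    (W : ℝ → Ω → ℝ) (hW : IsBrownianMotion P W)
    (A : ℕ → Ω → ℝ) (hAmeas : ∀ N, Measurable (A N)) (hApos : ∀ N ω, 0 ≤ A N ω)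
    (hAL2 : ∀ N, Integrable (fun ω => (A N ω) ^ 2) P)
    (hAindep : ∀ N, IndepFun (A N) (fun ω => fun t : ℝ => W t ω) P)
    (hA1 : Tendsto (fun N => ∫ ω, A N ω ∂P) atTop (nhds m))
    (hA2 : Tendsto (fun N => ∫ ω, (A N ω) ^ 2 ∂P) atTop (nhds (m ^ 2))) :
    ∀ ε > (0:ℝ),
      Tendsto (fun N : ℕ =>
          P {ω | ε < ⨆ t ∈ Set.Icc (0:ℝ) T,
            |A N ω * Real.exp ((η / 2 - 1 / (2 * N)) * t + W t ω / Real.sqrt N)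
              - m * Real.exp (η * t / 2)|})
        atTop (nhds 0) :=
  sup_exponential_martingale_tendsto_in_probability_general P η T m hη hT W hW A hAmeas hApos hAL2
    hA1 hA2
end

section
/- Let ρ be a distributional solution of the Cauchy problem. Then for every function h : [0,T] × ℝ → ℝ which is continuous, has compact support contained in (0,T) × ℝ, and has continuous partial derivatives ∂_t h, ∂_x h and ∂²_{xx} h, and for every t ∈ [0,T]: ∫ h(t,x) ρ(t)(dx) − ∫ h(0,x) λ(dx) = ∫₀ᵗ ∫ [ ∂_s h(s,x) + m_λ e^{ηs/2} ( (η/2) ∂_x h(s,x) + (x/2) ∂²_{xx} h(s,x) ) ] ρ(s)(dx) ds. -/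
open MeasureTheory Set

/-!
Mollifying a `C²` function `g` with compact support yields Schwartz functions whose values and
first two derivatives converge uniformly to those of `g`, even after the second derivatives are
multiplied by `x`, since all supports stay in a fixed compact set. Both sides of the weak
formulation are stable under such convergence, so it extends to `g`, and by the fundamental
theorem of calculus `u ↦ ∫ g dρ(u)` is differentiable on `(0,T)` with derivative
`m_λ e^{ηu/2} ∫ ((η/2) g′ + (x/2) g″) dρ(u)`.

For a time-dependent `h`, the derivative of `s ↦ ∫ h(s,·) dρ(s)` at `τ` splits as in a product
rule: moving only the time argument of `h` contributes `∫ ∂ₜh(τ,·) dρ(τ)`, because difference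
quotients of `h` in time converge uniformly in `x` and `ρ` is weakly continuous; moving only the
measure contributes the derivative above for `g = h(τ,·)`. Integrating over `[0,t]` gives the claim.
-/

open Filter Topology Metric ContinuousLinearMap
open scoped Convolution ContDiff

section CompactSupport

variable {X Y F : Type*} [TopologicalSpace X] [TopologicalSpace Y]
  [NormedAddCommGroup F] [NormedSpace ℝ F]

theorem HasDerivAt.eq_zero_of_notMem_tsupport {f : X → F} {γ : ℝ → X} {t : ℝ} {f' : F}
    (hf : HasDerivAt (fun u => f (γ u)) f' t) (hγ : ContinuousAt γ t) (ht : γ t ∉ tsupport f) :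
    f' = 0 := by
  have hzero : (fun u => f (γ u)) =ᶠ[𝓝 t] fun _ => 0 :=
    hγ.eventually (notMem_tsupport_iff_eventuallyEq.1 ht)
  exact (hf.congr_of_eventuallyEq hzero.symm).unique (hasDerivAt_const t 0)

theorem HasCompactSupport.of_hasDerivAt_fst {f f' : ℝ × Y → F} (hf : HasCompactSupport f)
    (hd : ∀ p, HasDerivAt (fun u => f (u, p.2)) (f' p) p.1) : HasCompactSupport f' :=
  hf.mono' fun p hp => by_contra fun hnot =>
    hp ((hd p).eq_zero_of_notMem_tsupport (γ := fun u => (u, p.2)) (by fun_prop) hnot)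

theorem HasCompactSupport.of_hasDerivAt_snd {f f' : X × ℝ → F} (hf : HasCompactSupport f)
    (hd : ∀ p, HasDerivAt (fun y => f (p.1, y)) (f' p) p.2) : HasCompactSupport f' :=
  hf.mono' fun p hp => by_contra fun hnot =>
    hp ((hd p).eq_zero_of_notMem_tsupport (γ := fun y => (p.1, y)) (by fun_prop) hnot)

theorem HasCompactSupport.of_hasDerivAt {g g' : ℝ → F} (hg : HasCompactSupport g)
    (hd : ∀ x, HasDerivAt g (g' x) x) : HasCompactSupport g' :=
  funext (fun x => (hd x).deriv) ▸ hg.deriv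

theorem HasCompactSupport.comp_prodMk [T2Space Y] {M : Type*} [Zero M] {f : X × Y → M}
    (hf : HasCompactSupport f) (x : X) : HasCompactSupport fun y => f (x, y) :=
  .intro (hf.image continuous_snd) fun _ hy =>
    image_eq_zero_of_notMem_tsupport fun hxy => hy ⟨_, hxy, rfl⟩

end CompactSupport

section Integral

variable {Ω ι : Type*} [MeasurableSpace Ω]

theorem abs_integral_sub_integral_le {μ : Measure Ω} [IsProbabilityMeasure μ] {f g : Ω → ℝ}
    (hf : Integrable f μ) (hg : Integrable g μ) {C : ℝ} (hfg : ∀ x, |f x - g x| ≤ C) :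
    |∫ x, f x ∂μ - ∫ x, g x ∂μ| ≤ C := by
  rw [← integral_sub hf hg]
  simpa using norm_integral_le_of_norm_le_const (μ := μ) (f := fun x => f x - g x)
    (Eventually.of_forall hfg)

theorem TendstoUniformly.tendsto_integral_sub {l : Filter ι} {F : ι → Ω → ℝ} {f : Ω → ℝ}
    (hF : TendstoUniformly F f l) (μ : ι → ProbabilityMeasure Ω) :
    Tendsto (fun i => ∫ x, (F i x - f x) ∂(μ i : Measure Ω)) l (𝓝 0) := by
  refine Metric.tendsto_nhds.2 fun ε hε => ?_
  filter_upwards [Metric.tendstoUniformly_iff.1 hF (ε / 2) (half_pos hε)] with i hi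
  have hbound : ‖∫ x, (F i x - f x) ∂(μ i : Measure Ω)‖ ≤ ε / 2 := by
    simpa using norm_integral_le_of_norm_le_const (μ := (μ i : Measure Ω))
      (f := fun x => F i x - f x)
      (Eventually.of_forall fun x => by rw [← dist_eq_norm, dist_comm]; exact (hi x).le)
  rw [dist_zero_right]
  linarith

variable [TopologicalSpace Ω] [OpensMeasurableSpace Ω]

theorem tendsto_integral_of_hasCompactSupport {l : Filter ι} {μs : ι → ProbabilityMeasure Ω}
    {μ : ProbabilityMeasure Ω} (hμ : Tendsto μs l (𝓝 μ)) {f : Ω → ℝ} (hf : Continuous f)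
    (hfc : HasCompactSupport f) :
    Tendsto (fun i => ∫ x, f x ∂(μs i : Measure Ω)) l (𝓝 (∫ x, f x ∂(μ : Measure Ω))) := by
  obtain ⟨C, hC⟩ := hf.bounded_above_of_compact_support hfc
  exact ProbabilityMeasure.tendsto_iff_forall_integral_tendsto.1 hμ
    (.ofNormedAddCommGroup f hf C hC)

theorem continuous_integral_of_hasCompactSupport {X : Type*} [TopologicalSpace X]
    {μ : X → ProbabilityMeasure Ω} (hμ : Continuous μ) {f : Ω → ℝ} (hf : Continuous f)
    (hfc : HasCompactSupport f) : Continuous fun s => ∫ x, f x ∂(μ s : Measure Ω) :=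
  continuous_iff_continuousAt.2 fun s => tendsto_integral_of_hasCompactSupport (hμ.tendsto s) hf hfc

theorem integrable_comp_prodMk_of_hasCompactSupport [T2Space Ω] {X : Type*} [TopologicalSpace X]
    {f : X × Ω → ℝ} (hf : Continuous f) (hfc : HasCompactSupport f) (s : X)
    (μ : ProbabilityMeasure Ω) : Integrable (fun x => f (s, x)) (μ : Measure Ω) :=
  (hf.comp (Continuous.prodMk_right s)).integrable_of_hasCompactSupport (hfc.comp_prodMk s)

end Integral

section TimeDependent

variable {Ω : Type*}

theorem tendstoUniformly_slope_of_hasDerivAt {h ht : ℝ × Ω → ℝ}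
    (hht : ∀ p, HasDerivAt (fun u => h (u, p.2)) (ht p) p.1) {τ : ℝ}
    (hunif : TendstoUniformly (fun u x => ht (u, x)) (fun x => ht (τ, x)) (𝓝 τ)) :
    TendstoUniformly (fun u x => slope (fun r => h (r, x)) τ u) (fun x => ht (τ, x)) (𝓝[≠] τ) := by
  rw [Metric.tendstoUniformly_iff] at hunif ⊢
  intro ε hε
  obtain ⟨δ, hδ, hclose⟩ := Metric.eventually_nhds_iff_ball.1 (hunif (ε / 2) (half_pos hε))
  filter_upwards [self_mem_nhdsWithin, nhdsWithin_le_nhds (ball_mem_nhds τ hδ)] with u hne hu x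
  have hmvt := (convex_ball τ δ).norm_image_sub_le_of_norm_hasDerivWithin_le
    (f := fun r => h (r, x) - r * ht (τ, x))
    (fun r _ => ((hht (r, x)).sub (hasDerivAt_mul_const (ht (τ, x)))).hasDerivWithinAt)
    (fun r hr => by rw [← dist_eq_norm, dist_comm]; exact (hclose r hr x).le)
    (mem_ball_self hδ) hu
  have hne' : u - τ ≠ 0 := sub_ne_zero.2 hne
  have hslope : slope (fun r => h (r, x)) τ u - ht (τ, x)
      = ((h (u, x) - u * ht (τ, x)) - (h (τ, x) - τ * ht (τ, x))) / (u - τ) := by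
    rw [slope_def_field]
    field_simp
    ring
  rw [dist_comm, dist_eq_norm, hslope, norm_div]
  calc _ ≤ ε / 2 := div_le_of_le_mul₀ (norm_nonneg _) (by positivity) hmvt
    _ < ε := half_lt_self hε

variable [UniformSpace Ω] [T2Space Ω] [MeasurableSpace Ω] [OpensMeasurableSpace Ω]

theorem continuous_integral_comp_prodMk_of_hasCompactSupport {X : Type*} [UniformSpace X]
    {μ : X → ProbabilityMeasure Ω} (hμ : Continuous μ) {f : X × Ω → ℝ} (hf : Continuous f)
    (hfc : HasCompactSupport f) : Continuous fun s => ∫ x, f (s, x) ∂(μ s : Measure Ω) := by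
  refine continuous_iff_continuousAt.2 fun s₀ => ?_
  have hunif : TendstoUniformly (fun s x => f (s, x)) (fun x => f (s₀, x)) (𝓝 s₀) :=
    UniformContinuous₂.tendstoUniformly (hfc.uniformContinuous_of_continuous hf)
  have hfixed := tendsto_integral_of_hasCompactSupport (f := fun x => f (s₀, x)) (hμ.tendsto s₀)
    (hf.comp (Continuous.prodMk_right s₀)) (hfc.comp_prodMk s₀)
  have hsum := (hunif.tendsto_integral_sub μ).add hfixed
  rw [zero_add] at hsum
  refine hsum.congr fun s => ?_
  rw [integral_sub (integrable_comp_prodMk_of_hasCompactSupport hf hfc s (μ s))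
    (integrable_comp_prodMk_of_hasCompactSupport hf hfc s₀ (μ s)), sub_add_cancel]

theorem hasDerivAt_integral_pairing {μ : ℝ → ProbabilityMeasure Ω}
    {h ht : ℝ × Ω → ℝ} {τ L : ℝ} (hμ : ContinuousAt μ τ) (hh : Continuous h)
    (hhc : HasCompactSupport h) (hht : ∀ p, HasDerivAt (fun u => h (u, p.2)) (ht p) p.1)
    (htc : Continuous ht) (htcs : HasCompactSupport ht)
    (hL : HasDerivAt (fun u => ∫ x, h (τ, x) ∂(μ u : Measure Ω)) L τ) :
    HasDerivAt (fun u => ∫ x, h (u, x) ∂(μ u : Measure Ω))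
      (∫ x, ht (τ, x) ∂(μ τ : Measure Ω) + L) τ := by
  have hint := integrable_comp_prodMk_of_hasCompactSupport hh hhc
  have hsplit : (fun u => ∫ x, h (u, x) ∂(μ u : Measure Ω)) = fun u =>
      ∫ x, (h (u, x) - h (τ, x)) ∂(μ u : Measure Ω) + ∫ x, h (τ, x) ∂(μ u : Measure Ω) := by
    funext u
    rw [integral_sub (hint u (μ u)) (hint τ (μ u)), sub_add_cancel]
  rw [hsplit]
  refine HasDerivAt.add ?_ hL
  rw [hasDerivAt_iff_tendsto_slope]
  have hslopes := (tendstoUniformly_slope_of_hasDerivAt (τ := τ) hht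
    (UniformContinuous₂.tendstoUniformly
      (htcs.uniformContinuous_of_continuous htc))).tendsto_integral_sub μ
  have hfixed := tendsto_integral_of_hasCompactSupport (f := fun x => ht (τ, x))
    (hμ.tendsto.mono_left (nhdsWithin_le_nhds (s := {τ}ᶜ)))
    (htc.comp (Continuous.prodMk_right τ)) (htcs.comp_prodMk τ)
  have hsum := hslopes.add hfixed
  rw [zero_add] at hsum
  refine hsum.congr fun u => ?_
  have hsl : Integrable (fun x => slope (fun r => h (r, x)) τ u) (μ u : Measure Ω) :=
    ((hint u (μ u)).sub (hint τ (μ u))).const_mul (u - τ)⁻¹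
  rw [integral_sub hsl (integrable_comp_prodMk_of_hasCompactSupport htc htcs τ (μ u)),
    sub_add_cancel]
  simp only [slope_def_module, sub_self, integral_zero, sub_zero, smul_eq_mul]
  exact integral_const_mul _ _

end TimeDependent

theorem UniformContinuous.exists_abs_normed_convolution_sub_le {u : ℝ → ℝ}
    (hu : UniformContinuous u) {ε : ℝ} (hε : 0 < ε) :
    ∃ δ > 0, ∀ φ : ContDiffBump (0 : ℝ), φ.rOut ≤ δ →
      ∀ x, |(φ.normed volume ⋆[lsmul ℝ ℝ] u) x - u x| ≤ ε := by
  obtain ⟨δ, hδ, hclose⟩ := Metric.uniformContinuous_iff.1 hu ε hε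
  refine ⟨δ, hδ, fun φ hφ x => ?_⟩
  rw [← Real.dist_eq]
  exact φ.dist_normed_convolution_le hu.continuous.aestronglyMeasurable fun y hy =>
    (hclose (lt_of_lt_of_le hy hφ)).le

section Mollification

variable (φ : ContDiffBump (0 : ℝ))

theorem ContDiffBump.hasDerivAt_normed_convolution {g g' : ℝ → ℝ}
    (hg : ∀ x, HasDerivAt g (g' x) x) (hg' : Continuous g') (hgc : HasCompactSupport g) (x : ℝ) :
    HasDerivAt (φ.normed volume ⋆[lsmul ℝ ℝ] g) ((φ.normed volume ⋆[lsmul ℝ ℝ] g') x) x := by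
  have hderiv : deriv g = g' := funext fun x => (hg x).deriv
  have hC1 : ContDiff ℝ 1 g :=
    contDiff_one_iff_deriv.2 ⟨fun x => (hg x).differentiableAt, hderiv ▸ hg'⟩
  simpa only [hderiv] using
    hgc.hasDerivAt_convolution_right (lsmul ℝ ℝ) φ.integrable_normed.locallyIntegrable hC1 x

theorem ContDiffBump.abs_mul_normed_convolution_sub_le {u : ℝ → ℝ} {R ε : ℝ} (hR₀ : 0 ≤ R)
    (hR : tsupport u ⊆ closedBall 0 R) (hε : ∀ x, |(φ.normed volume ⋆[lsmul ℝ ℝ] u) x - u x| ≤ ε)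
    (x : ℝ) : |x * ((φ.normed volume ⋆[lsmul ℝ ℝ] u) x - u x)| ≤ (R + φ.rOut) * ε := by
  have hε₀ : 0 ≤ ε := (abs_nonneg _).trans (hε x)
  by_cases hvanish : ∀ y ∈ ball x φ.rOut, u y = 0
  · have hx : u x = 0 := hvanish x (mem_ball_self φ.rOut_pos)
    rw [φ.normed_convolution_eq_right fun y hy => (hvanish y hy).trans hx.symm, sub_self,
      mul_zero, abs_zero]
    exact mul_nonneg (by linarith [φ.rOut_pos]) hε₀
  · push Not at hvanish
    obtain ⟨y, hy, hy0⟩ := hvanish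
    have hyR := hR (subset_tsupport u hy0)
    rw [mem_ball, Real.dist_eq] at hy
    rw [mem_closedBall, Real.dist_eq, sub_zero] at hyR
    rw [abs_mul]
    refine mul_le_mul ?_ (hε x) (abs_nonneg _) (by linarith [φ.rOut_pos])
    linarith [abs_sub_abs_le_abs_sub x y, abs_sub_comm x y]

end Mollification

theorem exists_contDiff_hasCompactSupport_approx {g g' g'' : ℝ → ℝ}
    (hg : ∀ x, HasDerivAt g (g' x) x) (hg' : ∀ x, HasDerivAt g' (g'' x) x)
    (hg'' : Continuous g'') (hgc : HasCompactSupport g) {ε : ℝ} (hε : 0 < ε) :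
    ∃ f : ℝ → ℝ, ContDiff ℝ ∞ f ∧ HasCompactSupport f ∧ ∀ x,
      |f x - g x| ≤ ε ∧ |deriv f x - g' x| ≤ ε ∧ |x * (deriv (deriv f) x - g'' x)| ≤ ε := by
  have hgc' : Continuous g := Differentiable.continuous fun x => (hg x).differentiableAt
  have hg'c : Continuous g' := Differentiable.continuous fun x => (hg' x).differentiableAt
  have hg'cs := hgc.of_hasDerivAt hg
  have hg''cs := hg'cs.of_hasDerivAt hg'
  obtain ⟨R, hR₀, hR⟩ := hg''cs.isBounded.subset_closedBall_lt 0 0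
  -- `|x| ≤ R + 1` wherever the mollified second derivative can differ from `g''`
  set ε' := ε / (R + 1)
  have hε' : 0 < ε' := by positivity
  have hε'ε : ε' ≤ ε := div_le_self hε.le (by linarith)
  obtain ⟨δ₀, hδ₀, h₀⟩ :=
    (hgc.uniformContinuous_of_continuous hgc').exists_abs_normed_convolution_sub_le hε'
  obtain ⟨δ₁, hδ₁, h₁⟩ :=
    (hg'cs.uniformContinuous_of_continuous hg'c).exists_abs_normed_convolution_sub_le hε'
  obtain ⟨δ₂, hδ₂, h₂⟩ :=
    (hg''cs.uniformContinuous_of_continuous hg'').exists_abs_normed_convolution_sub_le hε'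
  set r := min 1 (min δ₀ (min δ₁ δ₂))
  have hr : 0 < r := lt_min one_pos (lt_min hδ₀ (lt_min hδ₁ hδ₂))
  have hr' : r ≤ 1 ∧ r ≤ δ₀ ∧ r ≤ δ₁ ∧ r ≤ δ₂ := by simp [r]
  let φ : ContDiffBump (0 : ℝ) := ⟨r / 2, r, half_pos hr, half_lt_self hr⟩
  have hderiv₁ : deriv (φ.normed volume ⋆[lsmul ℝ ℝ] g) = φ.normed volume ⋆[lsmul ℝ ℝ] g' :=
    funext fun x => (φ.hasDerivAt_normed_convolution hg hg'c hgc x).deriv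
  have hderiv₂ : deriv (φ.normed volume ⋆[lsmul ℝ ℝ] g') = φ.normed volume ⋆[lsmul ℝ ℝ] g'' :=
    funext fun x => (φ.hasDerivAt_normed_convolution hg' hg'' hg'cs x).deriv
  refine ⟨φ.normed volume ⋆[lsmul ℝ ℝ] g,
    φ.hasCompactSupport_normed.contDiff_convolution_left _ (φ.contDiff_normed (n := ⊤))
      hgc'.locallyIntegrable,
    φ.hasCompactSupport_normed.convolution _ hgc, fun x => ⟨?_, ?_, ?_⟩⟩
  · exact (h₀ φ hr'.2.1 x).trans hε'ε
  · rw [hderiv₁]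
    exact (h₁ φ hr'.2.2.1 x).trans hε'ε
  · rw [hderiv₁, hderiv₂]
    calc _ ≤ (R + r) * ε' := φ.abs_mul_normed_convolution_sub_le hR₀.le hR (h₂ φ hr'.2.2.2) x
      _ ≤ (R + 1) * ε' := by gcongr; exact hr'.1
      _ = ε := mul_div_cancel₀ _ (by positivity)

theorem HasCompactSupport.generator {g' g'' : ℝ → ℝ} (hg' : HasCompactSupport g')
    (hg'' : HasCompactSupport g'') (η : ℝ) :
    HasCompactSupport fun x => η / 2 * g' x + x / 2 * g'' x :=
  hg'.mul_left.add hg''.mul_left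

section ExpWeighted

variable {μ : ℝ → ProbabilityMeasure ℝ} (hμ : Continuous μ) (η : ℝ)
include hμ

theorem continuous_exp_mul_integral {w : ℝ → ℝ} (hw : Continuous w) (hwc : HasCompactSupport w) :
    Continuous fun s => Real.exp (η * s / 2) * ∫ x, w x ∂(μ s : Measure ℝ) :=
  (by fun_prop : Continuous fun s : ℝ => Real.exp (η * s / 2)).mul
    (continuous_integral_of_hasCompactSupport hμ hw hwc)

theorem abs_intervalIntegral_exp_mul_integral_sub_le {w₁ w₂ : ℝ → ℝ} (hw₁ : Continuous w₁)
    (hw₁c : HasCompactSupport w₁) (hw₂ : Continuous w₂) (hw₂c : HasCompactSupport w₂) {δ : ℝ}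
    (hδ : ∀ x, |w₁ x - w₂ x| ≤ δ) {t : ℝ} (ht : 0 ≤ t) :
    |(∫ s in (0 : ℝ)..t, Real.exp (η * s / 2) * ∫ x, w₁ x ∂(μ s : Measure ℝ))
      - ∫ s in (0 : ℝ)..t, Real.exp (η * s / 2) * ∫ x, w₂ x ∂(μ s : Measure ℝ)|
      ≤ Real.exp (|η| * t / 2) * δ * t := by
  rw [← intervalIntegral.integral_sub
    ((continuous_exp_mul_integral hμ η hw₁ hw₁c).intervalIntegrable _ _)
    ((continuous_exp_mul_integral hμ η hw₂ hw₂c).intervalIntegrable _ _), ← Real.norm_eq_abs]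
  refine (intervalIntegral.norm_integral_le_of_norm_le_const
    (C := Real.exp (|η| * t / 2) * δ) fun s hs => ?_).trans_eq
    (by rw [sub_zero, abs_of_nonneg ht])
  rw [uIoc_of_le ht] at hs
  rw [← mul_sub, norm_mul, Real.norm_eq_abs, Real.norm_eq_abs, Real.abs_exp]
  gcongr
  · exact hs.1.le
  · exact le_abs_self η
  · exact hs.2
  · exact abs_integral_sub_integral_le (hw₁.integrable_of_hasCompactSupport hw₁c)
      (hw₂.integrable_of_hasCompactSupport hw₂c) hδ

end ExpWeighted

theorem abs_generator_sub_generator_le {f' f'' g' g'' : ℝ → ℝ} (η : ℝ) {x δ : ℝ}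
    (h₁ : |f' x - g' x| ≤ δ) (h₂ : |x * (f'' x - g'' x)| ≤ δ) :
    |(η / 2 * g' x + x / 2 * g'' x) - (η / 2 * f' x + x / 2 * f'' x)| ≤ (|η| / 2 + 1 / 2) * δ := by
  calc _ = |η / 2 * (f' x - g' x) + x * (f'' x - g'' x) / 2| := by
        rw [abs_sub_comm]; ring_nf
    _ ≤ |η| / 2 * δ + δ / 2 := by
        refine (abs_add_le _ _).trans (add_le_add ?_ ?_)
        · rw [abs_mul, abs_div, abs_two]; gcongr
        · rw [abs_div, abs_two]; gcongr
    _ = (|η| / 2 + 1 / 2) * δ := by ring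

namespace IsDistribSol

variable {η T mlam : ℝ} {hT : 0 ≤ T} {lam : ProbabilityMeasure ℝ}
  {ρ : C(Icc (0 : ℝ) T, ProbabilityMeasure ℝ)} {g g' g'' : ℝ → ℝ}

theorem abs_integral_sub_sub_le_of_approx (hρ : IsDistribSol η T mlam hT lam ρ)
    (hg : ∀ x, HasDerivAt g (g' x) x) (hg' : ∀ x, HasDerivAt g' (g'' x) x) (hg'' : Continuous g'')
    (hgc : HasCompactSupport g) {f : ℝ → ℝ} (hfs : ContDiff ℝ ∞ f) (hfc : HasCompactSupport f)
    {δ : ℝ} (hfg : ∀ x, |f x - g x| ≤ δ ∧ |deriv f x - g' x| ≤ δ ∧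
      |x * (deriv (deriv f) x - g'' x)| ≤ δ) (t : Icc (0 : ℝ) T) :
    |(∫ x, g x ∂(ρ t : Measure ℝ)) - (∫ x, g x ∂(lam : Measure ℝ))
      - mlam * ∫ s in (0 : ℝ)..(t : ℝ), Real.exp (η * s / 2) *
          ∫ x, (η / 2 * g' x + x / 2 * g'' x) ∂(ρ (projIcc 0 T hT s) : Measure ℝ)|
      ≤ (2 + |mlam| * (Real.exp (|η| * t / 2) * (|η| / 2 + 1 / 2) * t)) * δ := by
  have hg'c : Continuous g' := Differentiable.continuous fun x => (hg' x).differentiableAt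
  have hg'cs := hgc.of_hasDerivAt hg
  have hfs' : ContDiff ℝ ∞ (deriv f) := (contDiff_infty_iff_deriv.1 hfs).2
  have hf' : Continuous (deriv f) := hfs'.continuous
  have hf'' : Continuous (deriv (deriv f)) := (contDiff_infty_iff_deriv.1 hfs').2.continuous
  have hf : (∫ x, f x ∂(ρ t : Measure ℝ)) - ∫ x, f x ∂(lam : Measure ℝ)
      = mlam * ∫ s in (0 : ℝ)..(t : ℝ), Real.exp (η * s / 2) *
          ∫ x, (η / 2 * deriv f x + x / 2 * deriv (deriv f) x)
            ∂(ρ (projIcc 0 T hT s) : Measure ℝ) :=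
    hρ.2.2 (hfc.toSchwartzMap hfs) t
  have hclose (ν : ProbabilityMeasure ℝ) :
      |∫ x, g x ∂(ν : Measure ℝ) - ∫ x, f x ∂(ν : Measure ℝ)| ≤ δ :=
    abs_integral_sub_integral_le
      ((Differentiable.continuous fun x => (hg x).differentiableAt).integrable_of_hasCompactSupport
        hgc) (hfs.continuous.integrable_of_hasCompactSupport hfc)
      fun x => abs_sub_comm (f x) (g x) ▸ (hfg x).1
  have hclose_time := abs_intervalIntegral_exp_mul_integral_sub_le
    (μ := fun s => ρ (projIcc 0 T hT s)) (ρ.continuous.comp continuous_projIcc) η (by fun_prop)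
    (hg'cs.generator (hg'cs.of_hasDerivAt hg') η) (by fun_prop)
    (hfc.deriv.generator hfc.deriv.deriv η)
    (fun x => abs_generator_sub_generator_le η (hfg x).2.1 (hfg x).2.2) t.2.1
  calc _ = |((∫ x, g x ∂(ρ t : Measure ℝ)) - ∫ x, f x ∂(ρ t : Measure ℝ))
        - ((∫ x, g x ∂(lam : Measure ℝ)) - ∫ x, f x ∂(lam : Measure ℝ))
        - mlam * ((∫ s in (0 : ℝ)..(t : ℝ), Real.exp (η * s / 2) *
            ∫ x, (η / 2 * g' x + x / 2 * g'' x) ∂(ρ (projIcc 0 T hT s) : Measure ℝ))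
          - ∫ s in (0 : ℝ)..(t : ℝ), Real.exp (η * s / 2) *
            ∫ x, (η / 2 * deriv f x + x / 2 * deriv (deriv f) x)
              ∂(ρ (projIcc 0 T hT s) : Measure ℝ))| := by
        congr 1; linear_combination hf
    _ ≤ δ + δ + |mlam| * (Real.exp (|η| * t / 2) * ((|η| / 2 + 1 / 2) * δ) * t) := by
        refine (abs_sub _ _).trans (add_le_add ((abs_sub _ _).trans
          (add_le_add (hclose (ρ t)) (hclose lam))) ?_)
        rw [abs_mul]
        exact mul_le_mul_of_nonneg_left hclose_time (abs_nonneg mlam)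
    _ = _ := by ring

theorem integral_sub_eq_of_hasDerivAt (hρ : IsDistribSol η T mlam hT lam ρ)
    (hg : ∀ x, HasDerivAt g (g' x) x) (hg' : ∀ x, HasDerivAt g' (g'' x) x) (hg'' : Continuous g'')
    (hgc : HasCompactSupport g) (t : Icc (0 : ℝ) T) :
    (∫ x, g x ∂(ρ t : Measure ℝ)) - ∫ x, g x ∂(lam : Measure ℝ)
      = mlam * ∫ s in (0 : ℝ)..(t : ℝ), Real.exp (η * s / 2) *
          ∫ x, (η / 2 * g' x + x / 2 * g'' x) ∂(ρ (projIcc 0 T hT s) : Measure ℝ) := by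
  set C := 2 + |mlam| * (Real.exp (|η| * t / 2) * (|η| / 2 + 1 / 2) * t)
  have hC : 0 < C := by have := t.2.1; positivity
  refine eq_of_forall_dist_le fun ε hε => ?_
  obtain ⟨f, hfs, hfc, hfg⟩ :=
    exists_contDiff_hasCompactSupport_approx hg hg' hg'' hgc (div_pos hε hC)
  rw [Real.dist_eq]
  exact (hρ.abs_integral_sub_sub_le_of_approx hg hg' hg'' hgc hfs hfc hfg t).trans_eq
    (mul_div_cancel₀ ε hC.ne')

theorem hasDerivAt_integral_of_hasDerivAt (hρ : IsDistribSol η T mlam hT lam ρ)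
    (hg : ∀ x, HasDerivAt g (g' x) x) (hg' : ∀ x, HasDerivAt g' (g'' x) x) (hg'' : Continuous g'')
    (hgc : HasCompactSupport g) {τ : ℝ} (hτ : τ ∈ Ioo 0 T) :
    HasDerivAt (fun u => ∫ x, g x ∂(ρ (projIcc 0 T hT u) : Measure ℝ))
      (mlam * (Real.exp (η * τ / 2) *
        ∫ x, (η / 2 * g' x + x / 2 * g'' x) ∂(ρ (projIcc 0 T hT τ) : Measure ℝ))) τ := by
  have hg'c : Continuous g' := Differentiable.continuous fun x => (hg' x).differentiableAt
  have hg'cs := hgc.of_hasDerivAt hg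
  have hA := continuous_exp_mul_integral (μ := fun s => ρ (projIcc 0 T hT s))
    (ρ.continuous.comp continuous_projIcc) η (by fun_prop)
    (hg'cs.generator (hg'cs.of_hasDerivAt hg') η)
  refine (((hA.integral_hasStrictDerivAt 0 τ).hasDerivAt.const_mul mlam).const_add
    (∫ x, g x ∂(lam : Measure ℝ))).congr_of_eventuallyEq ?_
  filter_upwards [Ioo_mem_nhds hτ.1 hτ.2] with u hu
  have := hρ.integral_sub_eq_of_hasDerivAt hg hg' hg'' hgc ⟨u, Ioo_subset_Icc_self hu⟩
  rw [projIcc_of_mem hT (Ioo_subset_Icc_self hu)]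
  linarith

theorem hasDerivAt_integral_of_hasDerivAt_prod (hρ : IsDistribSol η T mlam hT lam ρ)
    {h ht hx hxx : ℝ × ℝ → ℝ} (hcont : Continuous h) (hsupp : HasCompactSupport h)
    (hht : ∀ p : ℝ × ℝ, HasDerivAt (fun u => h (u, p.2)) (ht p) p.1)
    (hhx : ∀ p : ℝ × ℝ, HasDerivAt (fun y => h (p.1, y)) (hx p) p.2)
    (hhxx : ∀ p : ℝ × ℝ, HasDerivAt (fun y => hx (p.1, y)) (hxx p) p.2)
    (hhtc : Continuous ht) (hhxc : Continuous hx) (hhxxc : Continuous hxx)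
    {τ : ℝ} (hτ : τ ∈ Ioo 0 T) :
    HasDerivAt (fun s => ∫ x, h (s, x) ∂(ρ (projIcc 0 T hT s) : Measure ℝ))
      (∫ x, (ht (τ, x) + mlam * Real.exp (η * τ / 2) *
        (η / 2 * hx (τ, x) + x / 2 * hxx (τ, x))) ∂(ρ (projIcc 0 T hT τ) : Measure ℝ)) τ := by
  have hxcs := hsupp.of_hasDerivAt_snd hhx
  have hgen := (hxcs.comp_prodMk τ).generator ((hxcs.of_hasDerivAt_snd hhxx).comp_prodMk τ) η
  rw [integral_add (integrable_comp_prodMk_of_hasCompactSupport hhtc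
      (hsupp.of_hasDerivAt_fst hht) τ _)
    (((by fun_prop : Continuous _).integrable_of_hasCompactSupport hgen).const_mul _),
    integral_const_mul, mul_assoc]
  exact hasDerivAt_integral_pairing (ρ.continuous.comp continuous_projIcc).continuousAt hcont
    hsupp hht hhtc (hsupp.of_hasDerivAt_fst hht)
    (hρ.hasDerivAt_integral_of_hasDerivAt (fun x => hhx (τ, x)) (fun x => hhxx (τ, x))
      (by fun_prop) (hsupp.comp_prodMk τ) hτ)

end IsDistribSol

theorem distributional_solution_time_dependent_test_functions_general
    (η T : ℝ) (hT : 0 < T)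
    (lam : ProbabilityMeasure ℝ)
    (mlam : ℝ)
    (ρ : C(Set.Icc (0:ℝ) T, ProbabilityMeasure ℝ)) (hρ : IsDistribSol η T mlam hT.le lam ρ)
    (h ht hx hxx : ℝ × ℝ → ℝ)
    (hcont : Continuous h) (hsupp : HasCompactSupport h)
    (hht : ∀ p : ℝ × ℝ, HasDerivAt (fun u => h (u, p.2)) (ht p) p.1)
    (hhx : ∀ p : ℝ × ℝ, HasDerivAt (fun y => h (p.1, y)) (hx p) p.2)
    (hhxx : ∀ p : ℝ × ℝ, HasDerivAt (fun y => hx (p.1, y)) (hxx p) p.2)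
    (hhtc : Continuous ht) (hhxc : Continuous hx) (hhxxc : Continuous hxx) :
    ∀ t : Set.Icc (0:ℝ) T,
      (∫ x, h ((t : ℝ), x) ∂(ρ t : Measure ℝ)) - ∫ x, h (0, x) ∂(lam : Measure ℝ)
        = ∫ s in (0:ℝ)..(t : ℝ),
            ∫ x, (ht (s, x) + mlam * Real.exp (η * s / 2) *
                (η / 2 * hx (s, x) + x / 2 * hxx (s, x)))
              ∂(ρ (Set.projIcc 0 T hT.le s) : Measure ℝ) := by
  intro t
  have hμ : Continuous fun s => ρ (projIcc 0 T hT.le s) := ρ.continuous.comp continuous_projIcc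
  have hxcs := hsupp.of_hasDerivAt_snd hhx
  have hG := continuous_integral_comp_prodMk_of_hasCompactSupport hμ
    (f := fun p => ht p + mlam * Real.exp (η * p.1 / 2) * (η / 2 * hx p + p.2 / 2 * hxx p))
    (by fun_prop) ((hsupp.of_hasDerivAt_fst hht).add
      (hxcs.mul_left.add (hxcs.of_hasDerivAt_snd hhxx).mul_left).mul_left)
  rw [intervalIntegral.integral_eq_sub_of_hasDerivAt_of_le t.2.1
    (continuous_integral_comp_prodMk_of_hasCompactSupport hμ hcont hsupp).continuousOn
    (fun s hs => hρ.hasDerivAt_integral_of_hasDerivAt_prod hcont hsupp hht hhx hhxx hhtc hhxc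
      hhxxc ⟨hs.1, hs.2.trans_le t.2.2⟩) (hG.intervalIntegrable _ _),
    projIcc_of_mem _ t.2, projIcc_left, hρ.2.1]

/-- Any distributional solution of the Cauchy problem also satisfies the weak formulation
against time-dependent test functions `h ∈ C^{1,2}_c((0,T) × ℝ)`. -/
theorem distributional_solution_time_dependent_test_functions
    (η T : ℝ) (hη : 1 < η) (hT : 0 < T)
    (lam : ProbabilityMeasure ℝ) (hlam : (lam : Measure ℝ) (Set.Ici 0) = 1)
    (hmom : Integrable (fun x : ℝ => x) (lam : Measure ℝ))
    (mlam : ℝ) (hmlam : mlam = ∫ x, x ∂(lam : Measure ℝ)) (hmpos : 0 < mlam)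
    (ρ : C(Set.Icc (0:ℝ) T, ProbabilityMeasure ℝ)) (hρ : IsDistribSol η T mlam hT.le lam ρ)
    (h ht hx hxx : ℝ × ℝ → ℝ)
    (hcont : Continuous h) (hsupp : HasCompactSupport h)
    (hsupp' : tsupport h ⊆ Set.Ioo 0 T ×ˢ Set.univ)
    (hht : ∀ p : ℝ × ℝ, HasDerivAt (fun u => h (u, p.2)) (ht p) p.1)
    (hhx : ∀ p : ℝ × ℝ, HasDerivAt (fun y => h (p.1, y)) (hx p) p.2)
    (hhxx : ∀ p : ℝ × ℝ, HasDerivAt (fun y => hx (p.1, y)) (hxx p) p.2)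
    (hhtc : Continuous ht) (hhxc : Continuous hx) (hhxxc : Continuous hxx) :
    ∀ t : Set.Icc (0:ℝ) T,
      (∫ x, h ((t : ℝ), x) ∂(ρ t : Measure ℝ)) - ∫ x, h (0, x) ∂(lam : Measure ℝ)
        = ∫ s in (0:ℝ)..(t : ℝ),
            ∫ x, (ht (s, x) + mlam * Real.exp (η * s / 2) *
                (η / 2 * hx (s, x) + x / 2 * hxx (s, x)))
              ∂(ρ (Set.projIcc 0 T hT.le s) : Measure ℝ) :=
  distributional_solution_time_dependent_test_functions_general η T hT lam mlam ρ hρ h ht hx hxx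
    hcont hsupp hht hhx hhxx hhtc hhxc hhxxc
end
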